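/- arXiv:1501.04307 — 2 statements merged into one kernel-verified Lean document; each statement's English description precedes it below -/
import Mathlib

section
/- Let φ: D² → D² be the identity outside the disc of radius 1-η, and define for a ∈ (0,1] the map κ_a : ℝ² → ℝ² by κ_a(y) = (1/2)(y + a·φ(y/a)) for |y| ≤ a(1-η) and κ_a(y) = y otherwise. If κ_1 is an orientation-preserving diffeomorphism with det(dκ_1(y)) > δ > 0 for all y, then det(dκ_a(y)) > δ for all y and all a ∈ (0,1]; consequently each κ_a is injective. -/
/-- The midpoint map of the Alexander rescaling:
`κ_a(y) = (1/2)(y + a·φ(y/a))` for `|y| ≤ a(1-η)` and `κ_a(y) = y` otherwise. -/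
noncomputable def kappaMap (η : ℝ) (φ : ℝ × ℝ → ℝ × ℝ) (a : ℝ) (y : ℝ × ℝ) : ℝ × ℝ :=
  if ‖y‖ ≤ a * (1 - η) then (2 : ℝ)⁻¹ • (y + a • φ (a⁻¹ • y)) else y

/-- Rescaling identity: for `a > 0`, `κ_a(y) = a • κ_1(a⁻¹ • y)`. -/
lemma kappaMap_rescale (η : ℝ) (φ : ℝ × ℝ → ℝ × ℝ) {a : ℝ} (ha : 0 < a) (y : ℝ × ℝ) :
    kappaMap η φ a y = a • kappaMap η φ 1 (a⁻¹ • y) := by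
  have hcond : ‖a⁻¹ • y‖ ≤ 1 * (1 - η) ↔ ‖y‖ ≤ a * (1 - η) := by
    rw [norm_smul, Real.norm_eq_abs, abs_of_pos (inv_pos.mpr ha), one_mul]
    rw [inv_mul_le_iff₀ ha]
  unfold kappaMap
  by_cases h : ‖y‖ ≤ a * (1 - η)
  · rw [if_pos h, if_pos (hcond.mpr h)]
    simp only [inv_one, one_smul]
    rw [smul_comm a (2:ℝ)⁻¹]
    congr 1
    rw [smul_add, smul_smul a a⁻¹, mul_inv_cancel₀ ha.ne', one_smul]
  · rw [if_neg h, if_neg (fun hc => h (hcond.mp hc)), smul_smul,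
      mul_inv_cancel₀ ha.ne', one_smul]

/-- If `φ` is smooth and equals the identity outside the disc of radius `1 - η`, and
`κ_1` is an orientation-preserving diffeomorphism with `det(dκ_1(y)) > δ > 0` for all
`y`, then `det(dκ_a(y)) > δ` for all `y` and all `a ∈ (0,1]`, and consequently each
`κ_a` is injective. -/
theorem stmt9 (η : ℝ) (hη : 0 < η ∧ η < 1) (φ : ℝ × ℝ → ℝ × ℝ)
    (hφ : ContDiff ℝ (⊤ : ℕ∞) φ)
    (hφid : ∀ y : ℝ × ℝ, ¬ ‖y‖ ≤ 1 - η → φ y = y)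
    (hbij : Function.Bijective (kappaMap η φ 1))
    (δ : ℝ) (hδ : 0 < δ)
    (hdet1 : ∀ y : ℝ × ℝ, δ < LinearMap.det (fderiv ℝ (kappaMap η φ 1) y).toLinearMap) :
    ∀ a ∈ Set.Ioc (0 : ℝ) 1,
      (∀ y : ℝ × ℝ, δ < LinearMap.det (fderiv ℝ (kappaMap η φ a) y).toLinearMap) ∧
        Function.Injective (kappaMap η φ a) := by
  set g := kappaMap η φ 1 with hg
  -- g is differentiable everywhere (otherwise its fderiv would be 0, with det 0 < δ).
  have hdiff : ∀ y : ℝ × ℝ, DifferentiableAt ℝ g y := by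
    intro y
    by_contra h
    have h0 := fderiv_zero_of_not_differentiableAt h
    have := hdet1 y
    rw [h0] at this
    simp only [ContinuousLinearMap.coe_zero] at this
    rw [LinearMap.det_zero' (Module.Basis.finTwoProd ℝ)] at this
    linarith
  intro a ha
  obtain ⟨ha0, _⟩ := ha
  have hkey : kappaMap η φ a = fun y => a • g (a⁻¹ • y) :=
    funext fun y => kappaMap_rescale η φ ha0 y
  -- derivative of κ_a at y equals derivative of κ_1 at a⁻¹ • y
  have hderiv : ∀ y : ℝ × ℝ,
      HasFDerivAt (kappaMap η φ a) (fderiv ℝ g (a⁻¹ • y)) y := by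
    intro y
    rw [hkey]
    have h1 : HasFDerivAt (fun y : ℝ × ℝ => a⁻¹ • y)
        (a⁻¹ • ContinuousLinearMap.id ℝ (ℝ × ℝ)) y :=
      ((ContinuousLinearMap.id ℝ (ℝ × ℝ)).hasFDerivAt).const_smul a⁻¹
    have h2 := ((hdiff (a⁻¹ • y)).hasFDerivAt.comp y h1).const_smul a
    have heq : a • ((fderiv ℝ g (a⁻¹ • y)).comp
        (a⁻¹ • ContinuousLinearMap.id ℝ (ℝ × ℝ))) = fderiv ℝ g (a⁻¹ • y) := by
      refine ContinuousLinearMap.ext fun x => ?_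
      simp only [ContinuousLinearMap.smul_apply, ContinuousLinearMap.coe_comp',
        Function.comp_apply, ContinuousLinearMap.id_apply]
      rw [← map_smul, smul_smul, mul_inv_cancel₀ ha0.ne', one_smul]
    rw [heq] at h2
    exact h2
  constructor
  · intro y
    rw [(hderiv y).fderiv]
    exact hdet1 (a⁻¹ • y)
  · rw [hkey]
    intro x y hxy
    have h1 : g (a⁻¹ • x) = g (a⁻¹ • y) := smul_right_injective (ℝ × ℝ) ha0.ne' hxy
    have h2 : a⁻¹ • x = a⁻¹ • y := hbij.injective h1
    exact smul_right_injective (ℝ × ℝ) (inv_ne_zero ha0.ne') h2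
end

section
/- Let f : ℝ² → ℝ² be a smooth one-form-valued map α (a closed 1-form on ℝ², identified with a map ℝ² → ℝ² via a flat metric), and define ψ_r(q) = q − (r/2)·j·α(q) for r ∈ [0,1], where j is rotation by 90 degrees. If det(dψ_1(q)) > 0 for all q, then det(dψ_r(q)) > 0 for all q and all r ∈ [0,1]. -/
/-- Rotation by 90 degrees on `ℝ²`. -/
def jRot (v : ℝ × ℝ) : ℝ × ℝ := (-v.2, v.1)

/-!
With `A = dα(q)` symmetric, `dψ_r(q) = 1 - (r/2)·jA` and `jA` is traceless, so in dimension two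
`det(1 - s·jA) = 1 + s²·det(jA)`. This is affine in `s²` with value `1` at `s = 0`, hence
positive for all `s² ≤ 1/4` once it is positive at `s = 1/2`.
-/

open Module

lemma LinearMap.det_one_sub_smul_of_trace_eq_zero {K V : Type*} [Field K] [AddCommGroup V]
    [Module K V] (hV : finrank K V = 2) {f : V →ₗ[K] V} (hf : trace K V f = 0) (s : K) :
    LinearMap.det (1 - s • f) = 1 + s ^ 2 * LinearMap.det f := by
  have : FiniteDimensional K V := .of_finrank_eq_succ hV
  let b := finBasisOfFinrankEq K V hV
  rw [← det_toMatrix b, ← det_toMatrix b, map_sub, toMatrix_one, map_smul, Matrix.det_fin_two,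
    Matrix.det_fin_two]
  rw [trace_eq_matrix_trace K b, Matrix.trace_fin_two] at hf
  simp only [Matrix.sub_apply, Matrix.smul_apply, Matrix.one_apply_eq, smul_eq_mul,
    Matrix.one_apply_ne zero_ne_one, Matrix.one_apply_ne one_ne_zero]
  linear_combination (-s) * hf

lemma LinearMap.det_one_sub_smul_pos {K V : Type*} [Field K] [LinearOrder K] [IsStrictOrderedRing K]
    [AddCommGroup V] [Module K V] (hV : finrank K V = 2) {f : V →ₗ[K] V} (hf : trace K V f = 0)
    {s t : K} (ht : 0 < LinearMap.det (1 - t • f)) (hst : s ^ 2 ≤ t ^ 2) :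
    0 < LinearMap.det (1 - s • f) := by
  rw [det_one_sub_smul_of_trace_eq_zero hV hf] at ht ⊢
  rcases le_total 0 (LinearMap.det f) with hd | hd
  · positivity
  · nlinarith [mul_le_mul_of_nonpos_right hst hd]

noncomputable def jRotCLM : (ℝ × ℝ) →L[ℝ] (ℝ × ℝ) :=
  (-ContinuousLinearMap.snd ℝ ℝ ℝ).prod (ContinuousLinearMap.fst ℝ ℝ ℝ)

lemma jRotCLM_apply (v : ℝ × ℝ) : jRotCLM v = jRot v := rfl

lemma trace_jRotCLM_comp_eq_zero {A : (ℝ × ℝ) →L[ℝ] (ℝ × ℝ)}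
    (hA : ∀ v w, (A v).1 * w.1 + (A v).2 * w.2 = (A w).1 * v.1 + (A w).2 * v.2) :
    LinearMap.trace ℝ _ (jRotCLM ∘L A).toLinearMap = 0 := by
  rw [LinearMap.trace_eq_matrix_trace ℝ (Basis.finTwoProd ℝ), Matrix.trace_fin_two]
  have hsymm := hA (1, 0) (0, 1)
  simp only [mul_one, mul_zero, add_zero, zero_add] at hsymm
  simp [LinearMap.toMatrix_apply, jRotCLM_apply, jRot, hsymm]

lemma HasFDerivAt.id_sub_smul_jRot {α : ℝ × ℝ → ℝ × ℝ} {A : (ℝ × ℝ) →L[ℝ] (ℝ × ℝ)} {q : ℝ × ℝ}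
    (hα : HasFDerivAt α A q) (c : ℝ) :
    HasFDerivAt (fun p ↦ p - c • jRot (α p)) (.id ℝ _ - c • (jRotCLM ∘L A)) q :=
  (hasFDerivAt_id q).sub ((jRotCLM.hasFDerivAt.comp q hα).const_smul c)

/-- Let `α` be a (smoothly varying) closed 1-form on `ℝ²`, identified with a
differentiable map `ℝ² → ℝ²` whose derivative is symmetric (closedness), and set
`ψ_r(q) = q − (r/2)·j·α(q)` for `r ∈ [0,1]`. If `det(dψ_1(q)) > 0` for all `q`,
then `det(dψ_r(q)) > 0` for all `q` and all `r ∈ [0,1]`. -/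
theorem stmt12 (α : ℝ × ℝ → ℝ × ℝ) (hα : Differentiable ℝ α)
    (hclosed : ∀ q v w : ℝ × ℝ,
      (fderiv ℝ α q v).1 * w.1 + (fderiv ℝ α q v).2 * w.2 =
        (fderiv ℝ α q w).1 * v.1 + (fderiv ℝ α q w).2 * v.2)
    (ψ : ℝ → ℝ × ℝ → ℝ × ℝ)
    (hψ : ∀ r q, ψ r q = q - (r / 2) • jRot (α q))
    (h1 : ∀ q : ℝ × ℝ, 0 < LinearMap.det (fderiv ℝ (ψ 1) q).toLinearMap) :
    ∀ r ∈ Set.Icc (0 : ℝ) 1, ∀ q : ℝ × ℝ,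
      0 < LinearMap.det (fderiv ℝ (ψ r) q).toLinearMap := by
  rintro r ⟨hr0, hr1⟩ q
  have hderiv (s : ℝ) : (fderiv ℝ (ψ s) q).toLinearMap =
      1 - (s / 2) • (jRotCLM ∘L fderiv ℝ α q).toLinearMap := by
    rw [funext (hψ s), ((hα q).hasFDerivAt.id_sub_smul_jRot _).fderiv]
    rfl
  have h1q := h1 q
  rw [hderiv] at h1q ⊢
  exact LinearMap.det_one_sub_smul_pos (by simp) (trace_jRotCLM_comp_eq_zero (hclosed q)) h1q
    (by nlinarith)
end
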